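/- The algebra 𝕋 is flexible, i.e. x·(y·x) = (x·y)·x for all x, y ∈ 𝕋, and power-associative (every element generates an associative subalgebra; in particular x·(x·x) = (x·x)·x and (x·x)·(x·x) = ((x·x)·x)·x for all x ∈ 𝕋), but 𝕋 is not alternative: there exist x, y ∈ 𝕋 with x·(x·y) ≠ (x·x)·y. -/

import Mathlib

/-- Iterated Cayley–Dickson doubling starting from `ℝ`. -/
def CD : ℕ → Type
  | 0 => ℝ
  | n + 1 => CD n × CD n

instance cdAddCommGroup : ∀ n, AddCommGroup (CD n)
  | 0 => inferInstanceAs (AddCommGroup ℝ)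
  | n + 1 => letI := cdAddCommGroup n; inferInstanceAs (AddCommGroup (CD n × CD n))

noncomputable instance cdModule : ∀ n, Module ℝ (CD n)
  | 0 => inferInstanceAs (Module ℝ ℝ)
  | n + 1 => letI := cdModule n; inferInstanceAs (Module ℝ (CD n × CD n))

/-- Cayley–Dickson conjugation, starting from the identity on `ℝ`. -/
def cdConj : ∀ n, CD n → CD n
  | 0, x => x
  | n + 1, x => (cdConj n x.1, -x.2)

/-- Cayley–Dickson multiplication: `(a,b)(c,d) = (ac − d b̄, ā d + c b)`. -/
def cdMul : ∀ n, CD n → CD n → CD n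
  | 0, x, y => @Mul.mul ℝ _ x y
  | n + 1, x, y =>
      (cdMul n x.1 y.1 - cdMul n y.2 (cdConj n x.2),
       cdMul n (cdConj n x.1) y.2 + cdMul n y.1 x.2)

instance cdMulInst (n : ℕ) : Mul (CD n) := ⟨cdMul n⟩

instance cdOne : ∀ n, One (CD n)
  | 0 => ⟨(1 : ℝ)⟩
  | n + 1 => letI := cdOne n; ⟨((1 : CD n), 0)⟩

/-- The standard basis elements: under a doubling step `A → A × A`, a basis element
`e k` of `A` gives `e k = (e k, 0)` and `e (k + dim A) = (0, e k)`. -/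
def cdE : ∀ n, ℕ → CD n
  | 0, _ => (1 : ℝ)
  | n + 1, k => if k < 2 ^ n then (cdE n k, 0) else (0, cdE n (k - 2 ^ n))

/-- The trigintaduonions: the 32-dimensional real Cayley–Dickson algebra. -/
abbrev TT := CD 5

/-- The 32 standard basis elements `e 0 = 1, e 1, …, e 31` of `𝕋`. -/
def e (i : ℕ) : TT := cdE 5 i

/-- The trigintaduonion loop `T_L = {±e 0, ±e 1, …, ±e 31}`. -/
def TL : Set TT := {x | ∃ i < 32, x = e i ∨ x = -e i}

/-- A subloop of `T_L`: a nonempty subset of `T_L` closed under multiplication. -/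
def IsSubloop (N : Set TT) : Prop :=
  N ⊆ TL ∧ N.Nonempty ∧ ∀ x ∈ N, ∀ y ∈ N, x * y ∈ N

/-- Two subsets of `T_L` are isomorphic (as loops) if some bijection between them
preserves multiplication. -/
def LoopIso (A B : Set TT) : Prop :=
  ∃ f : TT → TT, Set.BijOn f A B ∧ ∀ x ∈ A, ∀ y ∈ A, f (x * y) = f x * f y


/-- Left-iterated powers `x^n` in `𝕋`. -/
def lpow (x : TT) : ℕ → TT
  | 0 => 1
  | n + 1 => lpow x n * x

/-!
Every Cayley–Dickson algebra `CD n` is quadratic: `x * x = trace x • x - normSq x • 1` and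
`x̄ = trace x • 1 - x`. Hence `span {1, x}` is closed under multiplication and associative, which
gives power-associativity. Flexibility passes from `A` to its double `A × A`: comparing components
reduces it to the linearized flexible law in `A` together with the quadratic identity.

Non-alternativity comes from the defects that each doubling creates: conjugation on `ℂ` is not the
identity, so the quaternions are not commutative, so the octonions are not associative, so the
sedenions are not alternative; and `a ↦ (a, 0)` embeds every algebra multiplicatively into its
double.
-/

theorem mul_mul_add_mul_mul_of_flexible {R : Type*} [NonUnitalNonAssocRing R]
    (hf : ∀ x y : R, x * (y * x) = x * y * x) (x y z : R) :
    x * (y * z) + z * (y * x) = x * y * z + z * y * x := by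
  have h := hf (x + z) y
  simp only [mul_add, add_mul] at h
  linear_combination (norm := abel) h - hf x y - hf z y

namespace CD

variable {n : ℕ}

-- A bare pair `(a, b)` has type `CD n × CD n`, whose `*` is the componentwise product.
def mk (a b : CD n) : CD (n + 1) := (a, b)

@[ext] lemma ext {x y : CD (n + 1)} (h₁ : x.1 = y.1) (h₂ : x.2 = y.2) : x = y := Prod.ext h₁ h₂

@[simp] lemma mk_fst (a b : CD n) : (mk a b).1 = a := rfl
@[simp] lemma mk_snd (a b : CD n) : (mk a b).2 = b := rfl
@[simp] lemma add_fst (x y : CD (n + 1)) : (x + y).1 = x.1 + y.1 := rfl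
@[simp] lemma add_snd (x y : CD (n + 1)) : (x + y).2 = x.2 + y.2 := rfl
@[simp] lemma sub_fst (x y : CD (n + 1)) : (x - y).1 = x.1 - y.1 := rfl
@[simp] lemma sub_snd (x y : CD (n + 1)) : (x - y).2 = x.2 - y.2 := rfl
@[simp] lemma smul_fst (r : ℝ) (x : CD (n + 1)) : (r • x).1 = r • x.1 := rfl
@[simp] lemma smul_snd (r : ℝ) (x : CD (n + 1)) : (r • x).2 = r • x.2 := rfl
@[simp] lemma one_fst : (1 : CD (n + 1)).1 = 1 := rfl
@[simp] lemma one_snd : (1 : CD (n + 1)).2 = 0 := rfl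
@[simp] lemma conj_fst (x : CD (n + 1)) : (cdConj (n + 1) x).1 = cdConj n x.1 := rfl
@[simp] lemma conj_snd (x : CD (n + 1)) : (cdConj (n + 1) x).2 = -x.2 := rfl
@[simp] lemma mul_fst (x y : CD (n + 1)) : (x * y).1 = x.1 * y.1 - y.2 * cdConj n x.2 := rfl
@[simp] lemma mul_snd (x y : CD (n + 1)) : (x * y).2 = cdConj n x.1 * y.2 + y.1 * x.2 := rfl

@[simp] lemma conj_add : ∀ n (x y : CD n), cdConj n (x + y) = cdConj n x + cdConj n y
  | 0, _, _ => rfl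
  | n + 1, x, y => by ext <;> simp [conj_add n, add_comm]

@[simp] lemma conj_smul : ∀ n (r : ℝ) (x : CD n), cdConj n (r • x) = r • cdConj n x
  | 0, _, _ => rfl
  | n + 1, r, x => by ext <;> simp [conj_smul n]

@[simp] lemma conj_conj : ∀ n (x : CD n), cdConj n (cdConj n x) = x
  | 0, _ => rfl
  | n + 1, x => by ext <;> simp [conj_conj n]

@[simp] lemma conj_one : ∀ n, cdConj n 1 = 1
  | 0 => rfl
  | n + 1 => by ext <;> simp [conj_one n]

def conjₗ (n : ℕ) : CD n →ₗ[ℝ] CD n where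
  toFun := cdConj n
  map_add' := conj_add n
  map_smul' := conj_smul n

@[simp] lemma conj_zero : cdConj n 0 = 0 := map_zero (conjₗ n)
@[simp] lemma conj_neg (x : CD n) : cdConj n (-x) = -cdConj n x := map_neg (conjₗ n) x
@[simp] lemma conj_sub (x y : CD n) : cdConj n (x - y) = cdConj n x - cdConj n y :=
  map_sub (conjₗ n) x y

mutual

protected lemma mul_add : ∀ n (x y z : CD n), x * (y + z) = x * y + x * z
  | 0, x, y, z => mul_add (R := ℝ) x y z
  | n + 1, x, y, z => by
    ext <;> simp only [mul_fst, mul_snd, add_fst, add_snd, CD.mul_add n, CD.add_mul n] <;> abel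

protected lemma add_mul : ∀ n (x y z : CD n), (x + y) * z = x * z + y * z
  | 0, x, y, z => add_mul (R := ℝ) x y z
  | n + 1, x, y, z => by
    ext <;> simp only [mul_fst, mul_snd, add_fst, add_snd, conj_add, CD.mul_add n, CD.add_mul n]
      <;> abel

end

mutual

protected lemma smul_mul : ∀ n (r : ℝ) (x y : CD n), (r • x) * y = r • (x * y)
  | 0, r, x, y => smul_mul_assoc (β := ℝ) r x y
  | n + 1, r, x, y => by ext <;> simp [CD.smul_mul n, CD.mul_smul n, smul_sub]

protected lemma mul_smul : ∀ n (r : ℝ) (x y : CD n), x * (r • y) = r • (x * y)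
  | 0, r, x, y => mul_smul_comm (β := ℝ) r x y
  | n + 1, r, x, y => by ext <;> simp [CD.smul_mul n, CD.mul_smul n, smul_sub]

end

instance : NonUnitalNonAssocRing (CD n) where
  left_distrib := CD.mul_add n
  right_distrib := CD.add_mul n
  zero_mul x := by simpa using CD.smul_mul n 0 0 x
  mul_zero x := by simpa using CD.mul_smul n 0 x 0

instance : IsScalarTower ℝ (CD n) (CD n) := ⟨CD.smul_mul n⟩

instance : SMulCommClass ℝ (CD n) (CD n) := ⟨fun r x y => (CD.mul_smul n r x y).symm⟩

protected lemma one_mul : ∀ n (x : CD n), 1 * x = x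
  | 0, x => one_mul (M := ℝ) x
  | n + 1, x => by ext <;> simp [CD.one_mul n]

protected lemma mul_one : ∀ n (x : CD n), x * 1 = x
  | 0, x => mul_one (M := ℝ) x
  | n + 1, x => by ext <;> simp [CD.one_mul n, CD.mul_one n]

instance : MulOneClass (CD n) where
  one_mul := CD.one_mul n
  mul_one := CD.mul_one n

lemma conj_mul : ∀ n (x y : CD n), cdConj n (x * y) = cdConj n y * cdConj n x
  | 0, x, y => mul_comm (G := ℝ) x y
  | n + 1, x, y => by ext <;> simp [conj_mul n]

def trace : ∀ n, CD n → ℝ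
  | 0 => fun x : ℝ => 2 * x
  | n + 1 => fun x => trace n x.1

def normSq : ∀ n, CD n → ℝ
  | 0 => fun x : ℝ => x ^ 2
  | n + 1 => fun x => normSq n x.1 + normSq n x.2

lemma trace_add : ∀ n (x y : CD n), trace n (x + y) = trace n x + trace n y
  | 0 => fun x y : ℝ => mul_add 2 x y
  | n + 1 => fun x y => trace_add n x.1 y.1

lemma conj_eq : ∀ n (x : CD n), cdConj n x = trace n x • 1 - x
  | 0 => fun x : ℝ => by change x = (2 * x) • (1 : ℝ) - x; rw [smul_eq_mul]; ring
  | n + 1 => fun x => by ext <;> simp [conj_eq n, trace]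

lemma mul_self_eq : ∀ n (x : CD n), x * x = trace n x • x - normSq n x • 1
  | 0 => fun x : ℝ => by
    change x * x = (2 * x) • x - (x ^ 2) • (1 : ℝ)
    simp only [smul_eq_mul]
    ring
  | n + 1 => fun x => by
    ext
    · simp only [mul_fst, mul_self_eq n x.1, conj_eq n x.2, mul_sub, mul_smul_comm, mul_one,
        mul_self_eq n x.2, sub_fst, smul_fst, one_fst, trace, normSq, add_smul, add_fst]
      abel
    · simp [conj_eq n x.1, sub_mul, trace]

lemma mul_add_mul_swap (x y : CD n) : x * y + y * x =
    trace n y • x + trace n x • y + (normSq n x + normSq n y - normSq n (x + y)) • 1 := by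
  have h := mul_self_eq n (x + y)
  rw [mul_add, add_mul, add_mul, mul_self_eq n x, mul_self_eq n y, trace_add] at h
  linear_combination (norm := module) h

section Flexible

variable (hf : ∀ x y : CD n, x * (y * x) = x * y * x)
include hf

lemma mul_mul_conj (u b : CD n) : u * b * cdConj n b = b * (cdConj n b * u) := by
  have hlin := mul_mul_add_mul_mul_of_flexible hf u b b
  rw [mul_self_eq n b] at hlin
  simp only [conj_eq n b, mul_sub, sub_mul, smul_mul_assoc, mul_smul_comm, one_mul, mul_one]
    at hlin ⊢
  linear_combination (norm := module) hlin

lemma mul_mul_conj_add (a b d : CD n) :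
    a * (b * cdConj n d) + a * d * cdConj n b = d * cdConj n b * a + b * (cdConj n d * a) := by
  have hlin := mul_mul_add_mul_mul_of_flexible hf a d b
  have hl := congrArg (a * ·) (mul_add_mul_swap b d)
  have hr := congrArg (· * a) (mul_add_mul_swap b d)
  simp only [mul_add, add_mul, smul_mul_assoc, mul_smul_comm, one_mul, mul_one] at hl hr
  simp only [conj_eq n b, conj_eq n d, mul_sub, sub_mul, smul_mul_assoc, mul_smul_comm, one_mul,
    mul_one]
  linear_combination (norm := module) hlin - hl + hr

end Flexible

theorem flexible : ∀ n (x y : CD n), x * (y * x) = x * y * x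
  | 0 => fun x y : ℝ => (mul_assoc x y x).symm
  | n + 1 => fun x y => by
    have hf := flexible n
    ext
    · simp only [mul_fst, mul_snd, conj_add, conj_mul, conj_conj, mul_add, add_mul, mul_sub,
        sub_mul]
      linear_combination (norm := module) hf x.1 y.1 - mul_mul_conj hf (cdConj n y.1) x.2 -
        mul_mul_conj_add hf x.1 x.2 y.2
    · simp only [mul_fst, mul_snd, conj_sub, conj_mul, conj_conj, conj_eq n x.1, conj_eq n y.1,
        mul_add, mul_sub, sub_mul, smul_mul_assoc, mul_smul_comm, one_mul, mul_one]
      module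

section PowerAssociative

open Submodule

variable (x : CD n)

lemma mul_mem_span_one_self {u v : CD n} (hu : u ∈ span ℝ {1, x}) (hv : v ∈ span ℝ {1, x}) :
    u * v ∈ span ℝ {1, x} := by
  obtain ⟨a, b, rfl⟩ := mem_span_pair.1 hu
  obtain ⟨c, d, rfl⟩ := mem_span_pair.1 hv
  refine mem_span_pair.2 ⟨a * c - b * d * normSq n x, a * d + b * c + b * d * trace n x, ?_⟩
  simp only [mul_add, add_mul, smul_mul_assoc, mul_smul_comm, one_mul, mul_one, mul_self_eq n x]
  module

lemma mul_assoc_of_mem_span_one_self {u v w : CD n} (hu : u ∈ span ℝ {1, x})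
    (hv : v ∈ span ℝ {1, x}) (hw : w ∈ span ℝ {1, x}) : u * v * w = u * (v * w) := by
  obtain ⟨a, b, rfl⟩ := mem_span_pair.1 hu
  obtain ⟨c, d, rfl⟩ := mem_span_pair.1 hv
  obtain ⟨e, f, rfl⟩ := mem_span_pair.1 hw
  simp only [mul_add, add_mul, sub_mul, mul_sub, smul_mul_assoc, mul_smul_comm, one_mul, mul_one,
    mul_self_eq n x]
  module

lemma self_mem_span_one_self : x ∈ span ℝ {1, x} := subset_span (Set.mem_insert_of_mem 1 rfl)

end PowerAssociative

lemma exists_conj_ne_self : ∃ a : CD 1, cdConj 1 a ≠ a := by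
  refine ⟨mk 0 1, fun h => ?_⟩
  have h₂ : (-1 : ℝ) = 1 := congrArg Prod.snd h
  norm_num at h₂

lemma exists_mul_ne_mul_of_conj_ne {a : CD n} (ha : cdConj n a ≠ a) :
    ∃ x y : CD (n + 1), x * y ≠ y * x :=
  ⟨mk a 0, mk 0 1, fun h => ha (by simpa using congrArg Prod.snd h)⟩

lemma exists_mul_mul_ne_of_mul_ne {a c : CD n} (hac : a * c ≠ c * a) :
    ∃ x y z : CD (n + 1), x * y * z ≠ x * (y * z) :=
  ⟨mk (cdConj n c) 0, mk (cdConj n a) 0, mk 0 1,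
    fun h => hac (by simpa [conj_mul] using congrArg Prod.snd h)⟩

/-- For `x = (a, b)` and `y = (c, 0)`, the second component of `x(xy) - (xx)y` is the associator
`(ac)b - a(cb)`. -/
lemma exists_not_leftAlternative_of_mul_mul_ne {a b c : CD n} (habc : a * c * b ≠ a * (c * b)) :
    ∃ x y : CD (n + 1), x * (x * y) ≠ x * x * y := by
  refine ⟨mk a b, mk c 0, fun h => habc ?_⟩
  have h₂ := congrArg Prod.snd h
  simp only [mul_fst, mul_snd, mk_fst, mk_snd, conj_eq n a, mul_zero, zero_mul, zero_add,
    sub_zero, mul_sub, sub_mul, mul_add, smul_mul_assoc, mul_smul_comm, one_mul] at h₂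
  linear_combination (norm := module) h₂

lemma exists_not_leftAlternative_succ {x y : CD n} (hxy : x * (x * y) ≠ x * x * y) :
    ∃ x y : CD (n + 1), x * (x * y) ≠ x * x * y :=
  ⟨mk x 0, mk y 0, fun h => hxy (by simpa using congrArg Prod.fst h)⟩

theorem exists_not_leftAlternative (hn : 4 ≤ n) : ∃ x y : CD n, x * (x * y) ≠ x * x * y := by
  induction n, hn using Nat.le_induction with
  | base =>
    obtain ⟨a, ha⟩ := exists_conj_ne_self
    obtain ⟨b, c, hbc⟩ := exists_mul_ne_mul_of_conj_ne ha
    obtain ⟨x, y, z, hxyz⟩ := exists_mul_mul_ne_of_mul_ne hbc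
    exact exists_not_leftAlternative_of_mul_mul_ne hxyz
  | succ n _ ih =>
    obtain ⟨x, y, hxy⟩ := ih
    exact exists_not_leftAlternative_succ hxy

end CD

open Submodule CD in
lemma lpow_mem_span (x : TT) : ∀ k, lpow x k ∈ span ℝ {1, x}
  | 0 => subset_span (Set.mem_insert 1 {x})
  | k + 1 => mul_mem_span_one_self x (lpow_mem_span x k) (self_mem_span_one_self x)

lemma lpow_add (x : TT) (a : ℕ) : ∀ b, lpow x a * lpow x b = lpow x (a + b)
  | 0 => mul_one (lpow x a)
  | b + 1 => by
    change lpow x a * (lpow x b * x) = lpow x (a + b) * x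
    rw [← CD.mul_assoc_of_mem_span_one_self x (lpow_mem_span x a) (lpow_mem_span x b)
      (CD.self_mem_span_one_self x), lpow_add x a b]

/-- `𝕋` is flexible and power-associative (powers multiply by addition of exponents;
in particular `x(xx) = (xx)x` and `(xx)(xx) = ((xx)x)x`), but not alternative. -/
theorem stmt18 :
    (∀ x y : TT, x * (y * x) = (x * y) * x) ∧
    (∀ (x : TT) (a b : ℕ), lpow x a * lpow x b = lpow x (a + b)) ∧
    (∀ x : TT, x * (x * x) = (x * x) * x ∧
      (x * x) * (x * x) = ((x * x) * x) * x) ∧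
    (∃ x y : TT, x * (x * y) ≠ (x * x) * y) := by
  refine ⟨CD.flexible 5, lpow_add, fun x => ⟨CD.flexible 5 x x, ?_⟩,
    CD.exists_not_leftAlternative (by norm_num)⟩
  have hx := CD.self_mem_span_one_self x
  exact (CD.mul_assoc_of_mem_span_one_self x (CD.mul_mem_span_one_self x hx hx) hx hx).symm
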